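/- The subspace I := span_𝔽{ŝ_{0̄,3k}−ŝ_{1̄,3k}, ŝ_{0̄,3k}−ŝ_{2̄,3k}, ŝ_{1̄,3k}−ŝ_{2̄,3k} : k ∈ ℤ₊} is an ideal of the algebra Ĥ (i.e. Ĥ·I ⊆ I), and I is invariant under the linear map f̂. -/

import Mathlib

namespace HatAlgebra

/-- Basis of the algebra `Ĥ`: vectors `â i` for `i : ℤ`, `ŝ_{0̄,j}` for `j` a positive
integer, and `ŝ_{1̄,3k}`, `ŝ_{2̄,3k}` for `k` a positive integer. -/
inductive HatB : Type
  | a : ℤ → HatB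
  | s0 : ℕ+ → HatB
  | s1 : ℕ+ → HatB
  | s2 : ℕ+ → HatB
  deriving DecidableEq

variable (F : Type*) [Field F]

/-- The underlying vector space of `Ĥ`: the free `F`-vector space on `HatB`. -/
abbrev HatH : Type _ := HatB →₀ F

/-- The basis vector `â i`. -/
noncomputable def aHat (i : ℤ) : HatH F := Finsupp.single (HatB.a i) 1

/-- The element `ŝ_{r̄,j}` of `Ĥ`, with the conventions `ŝ_{r̄,0} = 0` and
`ŝ_{1̄,j} = ŝ_{0̄,j} = ŝ_{2̄,j}` whenever `3 ∤ j`. -/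
noncomputable def sHat (r : ZMod 3) (j : ℕ) : HatH F :=
  if h : j = 0 then 0
  else if h3 : 3 ∣ j then
    if r = 0 then Finsupp.single (HatB.s0 ⟨j, Nat.pos_of_ne_zero h⟩) 1
    else if r = 1 then
      Finsupp.single (HatB.s1 ⟨j / 3,
        Nat.div_pos (Nat.le_of_dvd (Nat.pos_of_ne_zero h) h3) (by norm_num)⟩) 1
    else
      Finsupp.single (HatB.s2 ⟨j / 3,
        Nat.div_pos (Nat.le_of_dvd (Nat.pos_of_ne_zero h) h3) (by norm_num)⟩) 1
  else Finsupp.single (HatB.s0 ⟨j, Nat.pos_of_ne_zero h⟩) 1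

/-- The operation `∗`: `(−1) ∗ 1̄ = −1`, `(−1) ∗ 2̄ = 1`, `0 ∗ t̄ = 0`. -/
def hatStar (x : ℤ) (t : ZMod 3) : ℤ :=
  if x = 0 then 0 else if t = 1 then -1 else if t = 2 then 1 else 0

/-- The coefficient `(δ_{ī,r̄} − 1) ∗ (ī − r̄)` appearing in rule (Ĥ2). -/
def hatC (i r : ZMod 3) : ℤ := hatStar ((if i = r then 1 else 0) - 1) (i - r)

/-- Rule (Ĥ2): the product `â_i · ŝ_{r̄,j}`. -/
noncomputable def aMulS (i : ℤ) (r : ZMod 3) (j : ℕ) : HatH F :=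
  (-2 : F) • aHat F i + (aHat F (i - (j : ℤ)) + aHat F (i + (j : ℤ))) - sHat F r j
    - (hatC (i : ZMod 3) r : F) • (sHat F (r - 1) j - sHat F (r + 1) j)

/-- `ŝ_{0̄,n} + ŝ_{1̄,n} + ŝ_{2̄,n}`. -/
noncomputable def sSum (n : ℕ) : HatH F := sHat F 0 n + sHat F 1 n + sHat F 2 n

/-- For `r ≠ t` in `ℤ/3ℤ`, the signed sum `ŝ_{r̄,n} + ŝ_{t̄,n} − ŝ_{m̄,n}` where `m̄`
is the third residue class (appearing in rules (Ĥ5), (Ĥ6), (Ĥ7)). -/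
noncomputable def sT (r t : ZMod 3) (n : ℕ) : HatH F :=
  sHat F r n + sHat F t n - sHat F (-(r + t)) n

/-- Rules (Ĥ3)–(Ĥ7): the product `ŝ_{r̄,i} · ŝ_{t̄,j}`. -/
noncomputable def sMulS (r : ZMod 3) (i : ℕ) (t : ZMod 3) (j : ℕ) : HatH F :=
  if 3 ∣ i ∧ 3 ∣ j then
    if r = t then
      (2 : F) • (sHat F r i + sHat F r j) - (sHat F r (Nat.dist i j) + sHat F r (i + j))
    else
      (2 : F) • (sT F r t i + sT F r t j) - (sT F r t (Nat.dist i j) + sT F r t (i + j))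
  else
    (2 : F) • (sHat F r i + sHat F t j) - (2 : F) • (sSum F (Nat.dist i j) + sSum F (i + j))

/-- The product of `Ĥ` on basis vectors, given by rules (Ĥ1)–(Ĥ7) (extended
symmetrically, since the product is commutative). -/
noncomputable def mulB : HatB → HatB → HatH F
  | .a i, .a j => (-2 : F) • (aHat F i + aHat F j) + sHat F (i : ZMod 3) (i - j).natAbs
  | .a i, .s0 j => aMulS F i 0 (j : ℕ)
  | .s0 j, .a i => aMulS F i 0 (j : ℕ)
  | .a i, .s1 k => aMulS F i 1 (3 * (k : ℕ))
  | .s1 k, .a i => aMulS F i 1 (3 * (k : ℕ))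
  | .a i, .s2 k => aMulS F i 2 (3 * (k : ℕ))
  | .s2 k, .a i => aMulS F i 2 (3 * (k : ℕ))
  | .s0 i, .s0 j => sMulS F 0 (i : ℕ) 0 (j : ℕ)
  | .s0 i, .s1 k => sMulS F 0 (i : ℕ) 1 (3 * (k : ℕ))
  | .s1 k, .s0 i => sMulS F 0 (i : ℕ) 1 (3 * (k : ℕ))
  | .s0 i, .s2 k => sMulS F 0 (i : ℕ) 2 (3 * (k : ℕ))
  | .s2 k, .s0 i => sMulS F 0 (i : ℕ) 2 (3 * (k : ℕ))
  | .s1 h, .s1 k => sMulS F 1 (3 * (h : ℕ)) 1 (3 * (k : ℕ))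
  | .s1 h, .s2 k => sMulS F 1 (3 * (h : ℕ)) 2 (3 * (k : ℕ))
  | .s2 k, .s1 h => sMulS F 1 (3 * (h : ℕ)) 2 (3 * (k : ℕ))
  | .s2 h, .s2 k => sMulS F 2 (3 * (h : ℕ)) 2 (3 * (k : ℕ))

/-- The commutative bilinear product of `Ĥ`, as a bilinear map. -/
noncomputable def hatMul : HatH F →ₗ[F] HatH F →ₗ[F] HatH F :=
  Finsupp.lift (HatH F →ₗ[F] HatH F) F HatB fun x => Finsupp.lift (HatH F) F HatB (mulB F x)

/-- The product of two elements of `Ĥ`. -/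
noncomputable def hmul (x y : HatH F) : HatH F := hatMul F x y


/-- The linear map `f̂`, determined on basis vectors by `â_i ↦ â_{−i+1}`,
`ŝ_{0̄,j} ↦ ŝ_{0̄,j}` for `3 ∤ j`, `ŝ_{0̄,3k} ↦ ŝ_{1̄,3k}`, `ŝ_{1̄,3k} ↦ ŝ_{0̄,3k}`,
`ŝ_{2̄,3k} ↦ ŝ_{2̄,3k}`. -/
noncomputable def fHatB : HatB → HatH F
  | .a i => aHat F (-i + 1)
  | .s0 j => sHat F 1 (j : ℕ)
  | .s1 k => sHat F 0 (3 * (k : ℕ))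
  | .s2 k => sHat F 2 (3 * (k : ℕ))

noncomputable def fHat : HatH F →ₗ[F] HatH F := Finsupp.lift (HatH F) F HatB (fHatB F)

/-- The subspace `I := span{ŝ_{0̄,3k}−ŝ_{1̄,3k}, ŝ_{0̄,3k}−ŝ_{2̄,3k}, ŝ_{1̄,3k}−ŝ_{2̄,3k} : k ∈ ℤ₊}`. -/
noncomputable def idealI : Submodule F (HatH F) :=
  Submodule.span F {x | ∃ k : ℕ, 0 < k ∧
    (x = sHat F 0 (3 * k) - sHat F 1 (3 * k) ∨
     x = sHat F 0 (3 * k) - sHat F 2 (3 * k) ∨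
     x = sHat F 1 (3 * k) - sHat F 2 (3 * k))}

/-!
Modulo `I` the element `ŝ_{r̄,n}` no longer depends on `r̄`, and on the right-hand sides of
rules (Ĥ2)–(Ĥ7) the index `r̄` of a factor `ŝ_{r̄,j}` only enters through the indices of the
`ŝ`'s, with coefficients that agree once these are identified (for instance
`ŝ_{r̄,n} + ŝ_{t̄,n} − ŝ_{m̄,n} ≡ ŝ_{0̄,n}`). Hence `x · ŝ_{r̄,n} ≡ x · ŝ_{t̄,n}` modulo `I`,
which is `x · I ⊆ I`. The map `f̂` sends `ŝ_{r̄,n}` to `ŝ_{1̄-r̄,n}`, so it permutes the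
spanning set of `I` up to sign.
-/

open Submodule

lemma sHat_zero_eq_single {n : ℕ} (hn : 0 < n) :
    sHat F 0 n = Finsupp.single (HatB.s0 ⟨n, hn⟩) 1 := by
  rw [sHat, dif_neg hn.ne']
  by_cases h3 : 3 ∣ n
  · rw [dif_pos h3, if_pos rfl]
  · rw [dif_neg h3]

lemma sHat_three_mul_one {k : ℕ} (hk : 0 < k) :
    sHat F 1 (3 * k) = Finsupp.single (HatB.s1 ⟨k, hk⟩) 1 := by
  rw [sHat, dif_neg (by omega), dif_pos ⟨k, rfl⟩, if_neg (by decide), if_pos rfl]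
  simp

lemma sHat_three_mul_two {k : ℕ} (hk : 0 < k) :
    sHat F 2 (3 * k) = Finsupp.single (HatB.s2 ⟨k, hk⟩) 1 := by
  rw [sHat, dif_neg (by omega), dif_pos ⟨k, rfl⟩, if_neg (by decide), if_neg (by decide)]
  simp

lemma exists_three_mul_or_sHat_eq (n : ℕ) :
    (∃ k, 0 < k ∧ n = 3 * k) ∨ ∀ r t : ZMod 3, sHat F r n = sHat F t n := by
  by_cases h3 : 3 ∣ n
  · obtain ⟨k, rfl⟩ := h3
    rcases Nat.eq_zero_or_pos k with rfl | hk
    · right; simp [sHat]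
    · exact .inl ⟨k, hk, rfl⟩
  · right
    intro r t
    have hn : n ≠ 0 := by rintro rfl; exact h3 (dvd_zero 3)
    rw [sHat, sHat, dif_neg hn, dif_neg hn, dif_neg h3, dif_neg h3]

lemma sHat_sub_sHat_mem (r t : ZMod 3) (n : ℕ) : sHat F r n - sHat F t n ∈ idealI F := by
  obtain ⟨k, hk, rfl⟩ | h := exists_three_mul_or_sHat_eq F n
  · have from_zero : ∀ r : ZMod 3, sHat F 0 (3 * k) - sHat F r (3 * k) ∈ idealI F := by
      intro r
      obtain rfl | rfl | rfl : r = 0 ∨ r = 1 ∨ r = 2 := by revert r; decide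
      · simp
      · exact subset_span ⟨k, hk, .inl rfl⟩
      · exact subset_span ⟨k, hk, .inr (.inl rfl)⟩
    simpa using sub_mem (from_zero t) (from_zero r)
  · rw [h r t, sub_self]
    exact zero_mem _

lemma mkQ_sHat (r : ZMod 3) (n : ℕ) :
    (idealI F).mkQ (sHat F r n) = (idealI F).mkQ (sHat F 0 n) :=
  (Submodule.Quotient.eq _).2 (sHat_sub_sHat_mem F r 0 n)

lemma mkQ_aMulS (i : ℤ) (r : ZMod 3) (j : ℕ) :
    (idealI F).mkQ (aMulS F i r j) = (idealI F).mkQ (aMulS F i 0 j) := by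
  simp only [aMulS, map_sub, map_add, map_smul, mkQ_sHat F _ j, sub_self, smul_zero]

lemma mkQ_sMulS (u : ZMod 3) (i : ℕ) (t : ZMod 3) (j : ℕ) :
    (idealI F).mkQ (sMulS F u i t j) = (idealI F).mkQ (sMulS F 0 i 0 j) := by
  unfold sMulS
  split_ifs <;> simp only [sT, sSum, map_sub, map_add, map_smul, mkQ_sHat F _ _, add_sub_cancel_right]

lemma sMulS_comm (r : ZMod 3) (i : ℕ) (t : ZMod 3) (j : ℕ) :
    sMulS F r i t j = sMulS F t j r i := by
  simp only [sMulS, sT, sSum, and_comm (a := 3 ∣ i), eq_comm (a := r), add_comm t r,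
    Nat.dist_comm j i, add_comm j i]
  split_ifs with _ hrt
  · subst hrt; module
  all_goals module

/-- The product `b · ŝ_{r̄,j}` of a basis vector `b` with `ŝ_{r̄,j}`, written with `b` as the
first factor of rules (Ĥ2)–(Ĥ7). -/
noncomputable def mulBS : HatB → ZMod 3 → ℕ → HatH F
  | .a i => aMulS F i
  | .s0 m => sMulS F 0 m
  | .s1 m => sMulS F 1 (3 * m)
  | .s2 m => sMulS F 2 (3 * m)

lemma hmul_single_single (b c : HatB) :
    hmul F (Finsupp.single b 1) (Finsupp.single c 1) = mulB F b c := by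
  simp [hmul, hatMul]

lemma hmul_single_sHat (b : HatB) (r : ZMod 3) {k : ℕ} (hk : 0 < k) :
    hmul F (Finsupp.single b 1) (sHat F r (3 * k)) = mulBS F b r (3 * k) := by
  obtain rfl | rfl | rfl : r = 0 ∨ r = 1 ∨ r = 2 := by revert r; decide
  · rw [sHat_zero_eq_single F (by omega), hmul_single_single]
    cases b
    case s1 m => exact sMulS_comm F 0 _ 1 _
    case s2 m => exact sMulS_comm F 0 _ 2 _
    all_goals rfl
  · rw [sHat_three_mul_one F hk, hmul_single_single]
    cases b
    case s2 m => exact sMulS_comm F 1 _ 2 _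
    all_goals rfl
  · rw [sHat_three_mul_two F hk, hmul_single_single]
    cases b <;> rfl

lemma mkQ_mulBS (b : HatB) (r : ZMod 3) (j : ℕ) :
    (idealI F).mkQ (mulBS F b r j) = (idealI F).mkQ (mulBS F b 0 j) := by
  cases b with
  | a i => exact mkQ_aMulS F i r j
  | s0 m => exact (mkQ_sMulS F 0 m r j).trans (mkQ_sMulS F 0 m 0 j).symm
  | s1 m => exact (mkQ_sMulS F 1 _ r j).trans (mkQ_sMulS F 1 _ 0 j).symm
  | s2 m => exact (mkQ_sMulS F 2 _ r j).trans (mkQ_sMulS F 2 _ 0 j).symm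

lemma mkQ_hmul_sHat (x : HatH F) (r : ZMod 3) (n : ℕ) :
    (idealI F).mkQ (hmul F x (sHat F r n)) = (idealI F).mkQ (hmul F x (sHat F 0 n)) := by
  obtain ⟨k, hk, rfl⟩ | h := exists_three_mul_or_sHat_eq F n
  · have key : (idealI F).mkQ ∘ₗ (hatMul F).flip (sHat F r (3 * k)) =
        (idealI F).mkQ ∘ₗ (hatMul F).flip (sHat F 0 (3 * k)) := by
      ext b
      have := mkQ_mulBS F b r (3 * k)
      rw [← hmul_single_sHat F b r hk, ← hmul_single_sHat F b 0 hk] at this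
      exact this
    exact LinearMap.congr_fun key x
  · rw [h r 0]

lemma fHat_sHat (r : ZMod 3) (n : ℕ) : fHat F (sHat F r n) = sHat F (1 - r) n := by
  have fHat_single (b : HatB) : fHat F (Finsupp.single b 1) = fHatB F b := by simp [fHat]
  have fHat_sHat_zero : fHat F (sHat F 0 n) = sHat F 1 n := by
    rcases n.eq_zero_or_pos with rfl | hn
    · simp [sHat]
    · rw [sHat_zero_eq_single F hn, fHat_single]
      rfl
  obtain ⟨k, hk, rfl⟩ | h := exists_three_mul_or_sHat_eq F n
  · obtain rfl | rfl | rfl : r = 0 ∨ r = 1 ∨ r = 2 := by revert r; decide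
    · simpa using fHat_sHat_zero
    · rw [sHat_three_mul_one F hk, fHat_single]
      rfl
    · rw [sHat_three_mul_two F hk, fHat_single]
      rfl
  · rw [h r 0, h (1 - r) 1, fHat_sHat_zero]

lemma idealI_le_comap {φ : HatH F →ₗ[F] HatH F}
    (hφ : ∀ r n, (idealI F).mkQ (φ (sHat F r n)) = (idealI F).mkQ (φ (sHat F 0 n))) :
    idealI F ≤ (idealI F).comap φ := by
  have diff_mem (r t : ZMod 3) (n : ℕ) : φ (sHat F r n - sHat F t n) ∈ idealI F := by
    rw [map_sub, ← Submodule.Quotient.eq, ← mkQ_apply, ← mkQ_apply, hφ r, hφ t]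
  refine span_le.2 ?_
  rintro _ ⟨k, -, rfl | rfl | rfl⟩ <;> exact diff_mem _ _ _

theorem idealI_is_ideal :
    (∀ x : HatH F, ∀ y ∈ idealI F, hmul F x y ∈ idealI F) ∧
      (∀ y ∈ idealI F, fHat F y ∈ idealI F) :=
  ⟨fun x => idealI_le_comap F (φ := hatMul F x) (mkQ_hmul_sHat F x),
    idealI_le_comap F fun r n => by simp only [fHat_sHat, mkQ_sHat F _ n]⟩

end HatAlgebra
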